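/- Consider the expected conditional log-likelihood ratio of a stochastic block model with emission densities from a natural exponential family, under random dyad sampling with probability $\rho$: $ELR(\theta, z) = \mathbb{E}_{\theta^\star}[\log(p(y^o|z;\theta)/p(y^o|z^\star;\theta^\star)) \mid z^\star]$. Then $ELR(\theta, z) = -\rho n^2 \sum_{q,q'}\sum_{\ell,\ell'} R(z)_{qq'} R(z)_{\ell\ell'} \mathrm{KL}(\pi^\star_{q\ell}, \pi_{q'\ell'}) \leq 0$, where $R(z)_{qq'} = \frac{1}{n}\sum_i z^\star_{iq} z_{iq'}$ is the confusion matrix and $\mathrm{KL}$ is the Kullback–Leibler divergence within the exponential family. -/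
import Mathlib

open MeasureTheory ProbabilityTheory Filter

noncomputable def KLf (ψ : ℝ → ℝ) (a b : ℝ) : ℝ := deriv ψ a * (a - b) + ψ b - ψ a

noncomputable def Rf {n Q : ℕ} (zstar ztest : Fin n → Fin Q) (a b : Fin Q) : ℝ :=
  (1 / (n : ℝ)) * ∑ i, (if zstar i = a then 1 else 0) * (if ztest i = b then 1 else 0)

lemma collapse_aux {Q n : ℕ} (a b : Fin n → Fin Q) (g : Fin Q → Fin Q → ℝ) :
    ∑ l : Fin Q, ∑ l' : Fin Q,
      (∑ j, (if a j = l then (1:ℝ) else 0) * (if b j = l' then 1 else 0)) * g l l'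
    = ∑ j, g (a j) (b j) := by
  simp_rw [Finset.sum_mul, ite_mul, one_mul, zero_mul]
  rw [Finset.sum_comm]
  refine Eq.trans (Finset.sum_congr rfl fun l' _ => Finset.sum_comm) ?_
  rw [Finset.sum_comm]
  simp [Finset.sum_ite_eq]

lemma KL_nonneg_aux (ψ : ℝ → ℝ) (hdiff : Differentiable ℝ ψ) (hconv : ConvexOn ℝ Set.univ ψ)
    (a b : ℝ) : 0 ≤ KLf ψ a b := by
  rw [KLf]
  rcases lt_trichotomy a b with h | h | h
  · have h1 := hconv.deriv_le_slope (Set.mem_univ a) (Set.mem_univ b) h (hdiff a)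
    rw [slope_def_field] at h1
    have hba : 0 < b - a := sub_pos.2 h
    have := (le_div_iff₀ hba).mp h1
    nlinarith
  · simp [h]
  · have h2 := hconv.slope_le_deriv (Set.mem_univ b) (Set.mem_univ a) h (hdiff a)
    rw [slope_def_field] at h2
    have hab : 0 < a - b := sub_pos.2 h
    have := (div_le_iff₀ hab).mp h2
    nlinarith

/-- The expected conditional log-likelihood ratio of an SBM with exponential-family emissions
under random dyad sampling equals `-ρ n² ∑_{q,q',ℓ,ℓ'} R_{qq'} R_{ℓℓ'} KL(π*_{qℓ}, π_{q'ℓ'})`,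
where `R` is the confusion matrix, and is hence nonpositive. -/
theorem ELR_eq_neg_KL_sum
    {Ω : Type*} [MeasurableSpace Ω] (μ : Measure Ω) [IsProbabilityMeasure μ]
    (n Q : ℕ) (hn : 0 < n)
    (ψ : ℝ → ℝ) (hdiff : Differentiable ℝ ψ) (hconv : ConvexOn ℝ Set.univ ψ)
    (ρ : ℝ) (hρ0 : 0 < ρ) (hρ1 : ρ ≤ 1)
    (πstar πtest : Fin Q → Fin Q → ℝ)
    (zstar ztest : Fin n → Fin Q)
    (y r : Fin n → Fin n → Ω → ℝ)
    (hint1 : ∀ i j, Integrable (fun ω => r i j ω * y i j ω) μ)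
    (hint2 : ∀ i j, Integrable (r i j) μ)
    (hmean : ∀ i j, ∫ ω, r i j ω * y i j ω ∂μ = ρ * deriv ψ (πstar (zstar i) (zstar j)))
    (hr : ∀ i j, ∫ ω, r i j ω ∂μ = ρ) :
    letI KL : ℝ → ℝ → ℝ := fun a b => deriv ψ a * (a - b) + ψ b - ψ a
    letI R : Fin Q → Fin Q → ℝ := fun a b =>
      (1 / (n : ℝ)) * ∑ i, (if zstar i = a then 1 else 0) * (if ztest i = b then 1 else 0)
    letI ELR : ℝ := ∫ ω, ∑ i, ∑ j,
      r i j ω * (y i j ω * (πtest (ztest i) (ztest j) - πstar (zstar i) (zstar j))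
        - (ψ (πtest (ztest i) (ztest j)) - ψ (πstar (zstar i) (zstar j)))) ∂μ
    ELR = -(ρ * (n : ℝ) ^ 2 *
        ∑ q, ∑ q', ∑ l, ∑ l', R q q' * R l l' * KL (πstar q l) (πtest q' l')) ∧
      ELR ≤ 0 := by
  have main :
      (∫ ω, ∑ i, ∑ j,
        r i j ω * (y i j ω * (πtest (ztest i) (ztest j) - πstar (zstar i) (zstar j))
          - (ψ (πtest (ztest i) (ztest j)) - ψ (πstar (zstar i) (zstar j)))) ∂μ)
      = -(ρ * (n : ℝ) ^ 2 *
          ∑ q, ∑ q', ∑ l, ∑ l', Rf zstar ztest q q' * Rf zstar ztest l l' *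
            KLf ψ (πstar q l) (πtest q' l')) ∧
      (∫ ω, ∑ i, ∑ j,
        r i j ω * (y i j ω * (πtest (ztest i) (ztest j) - πstar (zstar i) (zstar j))
          - (ψ (πtest (ztest i) (ztest j)) - ψ (πstar (zstar i) (zstar j)))) ∂μ) ≤ 0 := by
    set T : ℝ := ∑ i, ∑ j,
      KLf ψ (πstar (zstar i) (zstar j)) (πtest (ztest i) (ztest j)) with hT
    have hterm : ∀ i j : Fin n,
        ∫ ω, r i j ω * (y i j ω * (πtest (ztest i) (ztest j) - πstar (zstar i) (zstar j))
          - (ψ (πtest (ztest i) (ztest j)) - ψ (πstar (zstar i) (zstar j)))) ∂μ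
        = -(ρ * KLf ψ (πstar (zstar i) (zstar j)) (πtest (ztest i) (ztest j))) := by
      intro i j
      set c := πtest (ztest i) (ztest j) - πstar (zstar i) (zstar j) with hc
      set d := ψ (πtest (ztest i) (ztest j)) - ψ (πstar (zstar i) (zstar j)) with hd
      have heq : (fun ω => r i j ω * (y i j ω * c - d))
          = fun ω => c * (r i j ω * y i j ω) - d * r i j ω := by
        funext ω; ring
      rw [heq, integral_sub ((hint1 i j).const_mul c) ((hint2 i j).const_mul d),
        integral_const_mul, integral_const_mul, hmean, hr]
      simp only [KLf, hc, hd]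
      ring
    have hELRint : ∀ i j : Fin n, Integrable (fun ω =>
        r i j ω * (y i j ω * (πtest (ztest i) (ztest j) - πstar (zstar i) (zstar j))
          - (ψ (πtest (ztest i) (ztest j)) - ψ (πstar (zstar i) (zstar j))))) μ := by
      intro i j
      have heq : (fun ω => r i j ω * (y i j ω * (πtest (ztest i) (ztest j) - πstar (zstar i) (zstar j))
          - (ψ (πtest (ztest i) (ztest j)) - ψ (πstar (zstar i) (zstar j)))))
          = fun ω => (πtest (ztest i) (ztest j) - πstar (zstar i) (zstar j)) * (r i j ω * y i j ω)
            - (ψ (πtest (ztest i) (ztest j)) - ψ (πstar (zstar i) (zstar j))) * r i j ω := by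
        funext ω; ring
      rw [heq]
      exact ((hint1 i j).const_mul _).sub ((hint2 i j).const_mul _)
    have hELR : (∫ ω, ∑ i, ∑ j,
        r i j ω * (y i j ω * (πtest (ztest i) (ztest j) - πstar (zstar i) (zstar j))
          - (ψ (πtest (ztest i) (ztest j)) - ψ (πstar (zstar i) (zstar j)))) ∂μ)
        = -(ρ * T) := by
      rw [integral_finset_sum _ (fun i _ => integrable_finset_sum _ (fun j _ => hELRint i j))]
      have e : ∀ i : Fin n, (∫ ω, ∑ j, (r i j ω * (y i j ω * (πtest (ztest i) (ztest j) - πstar (zstar i) (zstar j))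
          - (ψ (πtest (ztest i) (ztest j)) - ψ (πstar (zstar i) (zstar j))))) ∂μ)
          = ∑ j, -(ρ * KLf ψ (πstar (zstar i) (zstar j)) (πtest (ztest i) (ztest j))) := by
        intro i
        rw [integral_finset_sum _ (fun j _ => hELRint i j)]
        exact Finset.sum_congr rfl fun j _ => hterm i j
      rw [Finset.sum_congr rfl fun i _ => e i]
      simp [hT, Finset.mul_sum]
    have hsum : ∑ q, ∑ q', ∑ l, ∑ l', Rf zstar ztest q q' * Rf zstar ztest l l' *
          KLf ψ (πstar q l) (πtest q' l')
        = (1 / (n:ℝ))^2 * T := by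
      have e1 : ∀ q q' l l' : Fin Q, Rf zstar ztest q q' * Rf zstar ztest l l' *
          KLf ψ (πstar q l) (πtest q' l')
          = (1/(n:ℝ))^2 * ((∑ i, (if zstar i = q then (1:ℝ) else 0) * (if ztest i = q' then 1 else 0))
            * ((∑ j, (if zstar j = l then (1:ℝ) else 0) * (if ztest j = l' then 1 else 0))
              * KLf ψ (πstar q l) (πtest q' l'))) := by
        intro q q' l l'
        simp only [Rf]
        ring
      simp_rw [e1, ← Finset.mul_sum]
      congr 1
      have e2 : ∀ q q' : Fin Q,
          ∑ l, ∑ l', (∑ j, (if zstar j = l then (1:ℝ) else 0) * (if ztest j = l' then 1 else 0))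
            * KLf ψ (πstar q l) (πtest q' l')
          = ∑ j, KLf ψ (πstar q (zstar j)) (πtest q' (ztest j)) :=
        fun q q' => collapse_aux zstar ztest (fun l l' => KLf ψ (πstar q l) (πtest q' l'))
      calc ∑ q, ∑ q', (∑ i, (if zstar i = q then (1:ℝ) else 0) * (if ztest i = q' then 1 else 0))
            * ∑ l, ∑ l', (∑ j, (if zstar j = l then (1:ℝ) else 0) * (if ztest j = l' then 1 else 0))
              * KLf ψ (πstar q l) (πtest q' l')
          = ∑ q, ∑ q', (∑ i, (if zstar i = q then (1:ℝ) else 0) * (if ztest i = q' then 1 else 0))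
            * ∑ j, KLf ψ (πstar q (zstar j)) (πtest q' (ztest j)) :=
            Finset.sum_congr rfl fun q _ => Finset.sum_congr rfl fun q' _ => by rw [e2]
        _ = T := by
            rw [hT]
            exact collapse_aux zstar ztest
              (fun q q' => ∑ j, KLf ψ (πstar q (zstar j)) (πtest q' (ztest j)))
    have hn' : (n:ℝ) ≠ 0 := Nat.cast_ne_zero.mpr hn.ne'
    have hrhs : ρ * (n : ℝ) ^ 2 *
        (∑ q, ∑ q', ∑ l, ∑ l', Rf zstar ztest q q' * Rf zstar ztest l l' *
          KLf ψ (πstar q l) (πtest q' l')) = ρ * T := by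
      rw [hsum]; field_simp
    constructor
    · rw [hELR, hrhs]
    · rw [hELR, neg_nonpos]
      refine mul_nonneg hρ0.le ?_
      exact Finset.sum_nonneg fun i _ => Finset.sum_nonneg fun j _ =>
        KL_nonneg_aux ψ hdiff hconv _ _
  exact main
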